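/- A game G = (T, A) is weakly finitely small in Games_A if and only if G is a finite game with A = Run(T) (i.e., G is finite and trivial for player Ali). -/

import Mathlib

universe u v w x y

namespace FraisseGames

/-- The initial segment (of length `n`) of an infinite sequence `R`. -/
def runPrefix {M : Type u} (R : ℕ → M) (n : ℕ) : List M :=
  (List.range n).map R

/-- `T` is a game tree over `M`: it is closed under initial segments, and every
moment of `T` has a one-step extension in `T`. -/
def IsGameTree {M : Type u} (T : Set (List M)) : Prop :=
  (∀ t ∈ T, ∀ k : ℕ, t.take k ∈ T) ∧ ∀ t ∈ T, ∃ x : M, t ++ [x] ∈ T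

/-- The set of runs of the tree `T`. -/
def Runs {M : Type u} (T : Set (List M)) : Set (ℕ → M) :=
  {R | ∀ n : ℕ, runPrefix R n ∈ T}

/-- A game over `M`: a game tree together with a payoff set of runs. -/
structure Game (M : Type u) : Type u where
  tree : Set (List M)
  isGameTree : IsGameTree tree
  payoff : Set (ℕ → M)
  payoff_subset : payoff ⊆ Runs tree

/-- A game is finite if its set of runs is finite. -/
def Game.IsFin {M : Type u} (G : Game M) : Prop := (Runs G.tree).Finite

/-- The subgame relation `G ≤ G'`. -/
def Game.Sub {M : Type u} (G G' : Game M) : Prop :=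
  G.tree ⊆ G'.tree ∧ G.payoff = G'.payoff ∩ Runs G.tree

/-- `f` is a chronological map from `T₁` to `T₂`: it maps `T₁` into `T₂` and it
preserves lengths and truncations of moments. -/
def Chronological {M₁ : Type u} {M₂ : Type v} (T₁ : Set (List M₁)) (T₂ : Set (List M₂))
    (f : List M₁ → List M₂) : Prop :=
  (∀ t ∈ T₁, f t ∈ T₂) ∧ (∀ t ∈ T₁, (f t).length = t.length) ∧
    ∀ t ∈ T₁, ∀ k : ℕ, f (t.take k) = (f t).take k

/-- `BarMapsTo f R S` says that the map `f̄` on runs induced by the chronological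
map `f` sends the run `R` to the run `S`, i.e. `S↾n = f (R↾n)` for all `n`. -/
def BarMapsTo {M₁ : Type u} {M₂ : Type v} (f : List M₁ → List M₂)
    (R : ℕ → M₁) (S : ℕ → M₂) : Prop :=
  ∀ n : ℕ, runPrefix S n = f (runPrefix R n)

/-- `f` is an A-morphism from `G₁` to `G₂`: a chronological map whose induced map on
runs sends runs won by Ali to runs won by Ali. -/
def IsAMorphism {M₁ : Type u} {M₂ : Type v} (G₁ : Game M₁) (G₂ : Game M₂)
    (f : List M₁ → List M₂) : Prop :=
  Chronological G₁.tree G₂.tree f ∧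
    ∀ R ∈ G₁.payoff, ∀ S : ℕ → M₂, BarMapsTo f R S → S ∈ G₂.payoff

/-- `f` is a game embedding from `G₁` to `G₂`: a chronological map, injective on the
tree, such that for every run `R` of `G₁`, `R ∈ A₁ ↔ f̄ R ∈ A₂`. -/
def IsGameEmbedding {M₁ : Type u} {M₂ : Type v} (G₁ : Game M₁) (G₂ : Game M₂)
    (f : List M₁ → List M₂) : Prop :=
  Chronological G₁.tree G₂.tree f ∧
    (∀ t ∈ G₁.tree, ∀ s ∈ G₁.tree, f t = f s → t = s) ∧
    ∀ R ∈ Runs G₁.tree, ∀ S : ℕ → M₂, BarMapsTo f R S → (R ∈ G₁.payoff ↔ S ∈ G₂.payoff)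

/-- `f` is an isomorphism of games from `G₁` onto `G₂`: a game embedding that is
surjective onto the tree of `G₂`. -/
def IsGameIso {M₁ : Type u} {M₂ : Type v} (G₁ : Game M₁) (G₂ : Game M₂)
    (f : List M₁ → List M₂) : Prop :=
  IsGameEmbedding G₁ G₂ f ∧ ∀ s ∈ G₂.tree, ∃ t ∈ G₁.tree, f t = s

/-- The set of eventually-zero infinite sequences of natural numbers. -/
def c00 : Set (ℕ → ℕ) := {R | ∃ N : ℕ, ∀ n ≥ N, R n = 0}

/-- The game `G_FL = (ω^{<ω}, c₀₀)`. -/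
def GFL : Game ℕ where
  tree := Set.univ
  isGameTree := ⟨fun _ _ _ => trivial, fun _ _ => ⟨0, trivial⟩⟩
  payoff := c00
  payoff_subset := fun _ _ _ => trivial

/-- The universal property of a colimit cocone in the category `Games_A` of games and
A-morphisms: every cocone of A-morphisms over the sequence factors through `q`
via a unique (up to agreement on the tree) A-morphism.  (Morphisms of `Games_A` are
identified when they agree on the game tree.) -/
def IsGamesACoconeColimit.{u', v', w'} {MS : ℕ → Type u'} (S : ∀ n, Game (MS n))
    (s : ∀ n, List (MS n) → List (MS (n + 1)))
    {N : Type v'} (L : Game N) (q : ∀ n, List (MS n) → List N) : Prop :=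
  ∀ (P : Type w') (H : Game P) (h : ∀ n, List (MS n) → List P),
    (∀ n, IsAMorphism (S n) H (h n)) →
    (∀ n, ∀ t ∈ (S n).tree, h (n + 1) (s n t) = h n t) →
    ∃ k : List N → List P, IsAMorphism L H k ∧
      (∀ n, ∀ t ∈ (S n).tree, k (q n t) = h n t) ∧
      ∀ k' : List N → List P, IsAMorphism L H k' →
        (∀ n, ∀ t ∈ (S n).tree, k' (q n t) = h n t) →
        ∀ t ∈ L.tree, k' t = k t

/-- A game `G` is weakly finitely small in `Games_A`: every A-morphism from `G` to
the colimit of a sequence in `Games_A` factors through some member of the sequence. -/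
def WeaklyFinSmallGamesA {M : Type u} (G : Game M) : Prop :=
  ∀ (MS : ℕ → Type u) (S : ∀ n, Game (MS n)) (s : ∀ n, List (MS n) → List (MS (n + 1))),
    (∀ n, IsAMorphism (S n) (S (n + 1)) (s n)) →
    ∀ (N : Type u) (L : Game N) (q : ∀ n, List (MS n) → List N),
      (∀ n, IsAMorphism (S n) L (q n)) →
      (∀ n, ∀ t ∈ (S n).tree, q (n + 1) (s n t) = q n t) →
      IsGamesACoconeColimit.{u, u, u} S s L q →
      ∀ f : List M → List N, IsAMorphism G L f →
        ∃ (n : ℕ) (f' : List M → List (MS n)),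
          IsAMorphism G (S n) f' ∧ ∀ t ∈ G.tree, q n (f' t) = f t

/-! A non-winning run `R₀` can be cut off along a chain of games whose union still contains it
(tagging moves with a Boolean keeps the truncated stages game trees), and infinitely many winning
runs can be given up one at a time; either way the embedding of `G` into the union factors through
no stage. Conversely, in a colimit of `Games_A` every winning run comes from some stage, and two
moments with the same image are identified by some connecting map. A finite game has finitely many
runs, which therefore lift to a common stage, and finitely many branch points, at which the lifts
become coherent after finitely many more connecting maps. -/

section Runs

variable {M : Type u} {N : Type v}

@[simp] lemma runPrefix_length (R : ℕ → M) (n : ℕ) : (runPrefix R n).length = n := by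
  simp [runPrefix]

lemma runPrefix_getElem (R : ℕ → M) {n i : ℕ} (h : i < (runPrefix R n).length) :
    (runPrefix R n)[i] = R i := by
  simp [runPrefix]

lemma runPrefix_eq_iff {R R' : ℕ → M} {n : ℕ} :
    runPrefix R n = runPrefix R' n ↔ ∀ i < n, R i = R' i := by
  simp [runPrefix, List.map_inj_left]

lemma runPrefix_injective : Function.Injective (runPrefix : (ℕ → M) → ℕ → List M) :=
  fun _ _ h => funext fun i => runPrefix_eq_iff.1 (congrFun h (i + 1)) i i.lt_succ_self

lemma runPrefix_take (R : ℕ → M) (n k : ℕ) :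
    (runPrefix R n).take k = runPrefix R (min k n) := by
  rw [runPrefix, runPrefix, ← List.map_take, List.take_range]

lemma runPrefix_take_of_le (R : ℕ → M) {n k : ℕ} (h : k ≤ n) :
    (runPrefix R n).take k = runPrefix R k := by
  rw [runPrefix_take, min_eq_left h]

lemma runPrefix_succ (R : ℕ → M) (n : ℕ) :
    runPrefix R (n + 1) = runPrefix R n ++ [R n] := by
  simp [runPrefix, List.range_succ]

lemma runPrefix_map (g : M → N) (R : ℕ → M) (n : ℕ) :
    runPrefix (g ∘ R) n = (runPrefix R n).map g := by
  simp [runPrefix]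

lemma runPrefix_eq_of_le {R R' : ℕ → M} {k n : ℕ} (hkn : k ≤ n)
    (h : runPrefix R n = runPrefix R' n) : runPrefix R k = runPrefix R' k := by
  rw [← runPrefix_take_of_le R hkn, h, runPrefix_take_of_le R' hkn]

lemma exists_forall_runPrefix_eq_le {R R' : ℕ → M} (h : R ≠ R') :
    ∃ d, runPrefix R d = runPrefix R' d ∧ ∀ e, runPrefix R e = runPrefix R' e → e ≤ d := by
  classical
  have hex : ∃ i, R i ≠ R' i := Function.ne_iff.1 h
  refine ⟨Nat.find hex, runPrefix_eq_iff.2 fun i hi => not_not.1 (Nat.find_min hex hi),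
    fun e he => not_lt.1 fun hlt => Nat.find_spec hex (runPrefix_eq_iff.1 he _ hlt)⟩

lemma exists_runPrefix_eq_take {u : ℕ → List M} (hu : ∀ k, u k <+: u (k + 1))
    (hlen : ∀ k, k ≤ (u k).length) :
    ∃ R : ℕ → M, ∀ k, ∀ m ≤ (u k).length, runPrefix R m = (u k).take m := by
  have hmono {k m : ℕ} (h : k ≤ m) : u k <+: u m := Nat.rel_of_forall_rel_succ_of_le _ hu h
  refine ⟨fun i => (u (i + 1))[i]'(hlen (i + 1)), fun k m hm =>
    List.ext_getElem (by simp [hm]) fun i hi _ => ?_⟩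
  simp only [runPrefix_getElem, List.getElem_take]
  exact ((hmono (le_max_left _ k)).getElem _).trans
    ((hmono (le_max_right _ _)).getElem (by simp at hi; omega)).symm

lemma exists_mem_runs_runPrefix_eq {T : Set (List M)} (hT : IsGameTree T) {t : List M}
    (ht : t ∈ T) : ∃ R ∈ Runs T, runPrefix R t.length = t := by
  choose x hx using hT.2
  let u : ℕ → T := fun k => (fun p : T => ⟨p.1 ++ [x p.1 p.2], hx p.1 p.2⟩)^[k] ⟨t, ht⟩
  have hu (k : ℕ) : (u (k + 1)).1 = (u k).1 ++ [x _ (u k).2] :=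
    congrArg Subtype.val (Function.iterate_succ_apply' _ k _)
  have hlen (k : ℕ) : (u k).1.length = t.length + k := by
    induction k with
    | zero => rfl
    | succ k ih => simp [hu, ih, Nat.add_assoc]
  obtain ⟨R, hR⟩ := exists_runPrefix_eq_take (u := fun k => (u k).1)
    (fun k => hu k ▸ List.prefix_append _ _) (fun k => by rw [hlen]; omega)
  exact ⟨R, fun m => hR m m (by rw [hlen]; omega) ▸ hT.1 _ (u m).2 m,
    (hR 0 _ le_rfl).trans t.take_length⟩

lemma Chronological.exists_barMapsTo {T₁ : Set (List M)} {T₂ : Set (List N)}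
    {g : List M → List N} (hg : Chronological T₁ T₂ g) {R : ℕ → M} (hR : R ∈ Runs T₁) :
    ∃ S, BarMapsTo g R S := by
  have hlen (m : ℕ) : (g (runPrefix R m)).length = m := by rw [hg.2.1 _ (hR m), runPrefix_length]
  obtain ⟨S, hS⟩ := exists_runPrefix_eq_take (u := fun m => g (runPrefix R m))
    (fun m => by
      rw [← runPrefix_take_of_le R m.le_succ, hg.2.2 _ (hR _)]
      exact List.take_prefix _ _)
    (fun m => (hlen m).ge)
  exact ⟨S, fun m => (hS m m (hlen m).ge).trans (List.take_of_length_le (hlen m).le)⟩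

lemma Chronological.mem_runs {T₁ : Set (List M)} {T₂ : Set (List N)} {g : List M → List N}
    (hg : Chronological T₁ T₂ g) {R : ℕ → M} (hR : R ∈ Runs T₁) {S : ℕ → N}
    (hS : BarMapsTo g R S) : S ∈ Runs T₂ :=
  fun m => hS m ▸ hg.1 _ (hR m)

lemma Chronological.exists_append_singleton {T₁ : Set (List M)} {T₂ : Set (List N)}
    {g : List M → List N} (hg : Chronological T₁ T₂ g) {t : List M} {x : M} (ht : t ++ [x] ∈ T₁) : ∃ y, g (t ++ [x]) = g t ++ [y] := by
  have htake : (g (t ++ [x])).take t.length = g t := by rw [← hg.2.2 _ ht, List.take_left]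
  obtain ⟨y, hy⟩ : ∃ y, (g (t ++ [x])).drop t.length = [y] :=
    List.length_eq_one_iff.1 (by simp [hg.2.1 _ ht])
  exact ⟨y, by rw [← List.take_append_drop t.length (g (t ++ [x])), htake, hy]⟩

end Runs

section Morphisms

variable {M : Type u} {N : Type v} {P : Type w}

lemma barMapsTo_id {R S : ℕ → M} (h : BarMapsTo id R S) : S = R :=
  runPrefix_injective (funext h)

lemma isAMorphism_id {G₁ G₂ : Game M} (htree : G₁.tree ⊆ G₂.tree)
    (hpay : G₁.payoff ⊆ G₂.payoff) : IsAMorphism G₁ G₂ id :=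
  ⟨⟨fun _ ht => htree ht, fun _ _ => rfl, fun _ _ _ => rfl⟩,
    fun _ hR _ hS => barMapsTo_id hS ▸ hpay hR⟩

lemma IsAMorphism.comp {G₁ : Game M} {G₂ : Game N} {G₃ : Game P} {g₁ : List M → List N}
    {g₂ : List N → List P} (h₂ : IsAMorphism G₂ G₃ g₂) (h₁ : IsAMorphism G₁ G₂ g₁) :
    IsAMorphism G₁ G₃ (g₂ ∘ g₁) := by
  refine ⟨⟨fun t ht => h₂.1.1 _ (h₁.1.1 t ht), fun t ht => ?_, fun t ht k => ?_⟩, ?_⟩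
  · rw [Function.comp_apply, h₂.1.2.1 _ (h₁.1.1 t ht), h₁.1.2.1 t ht]
  · rw [Function.comp_apply, h₁.1.2.2 t ht k, h₂.1.2.2 _ (h₁.1.1 t ht) k]; rfl
  · intro R hR S hS
    obtain ⟨S₁, hS₁⟩ := h₁.1.exists_barMapsTo (G₁.payoff_subset hR)
    exact h₂.2 S₁ (h₁.2 R hR S₁ hS₁) S fun m => (hS m).trans (congrArg g₂ (hS₁ m)).symm

lemma exists_isAMorphism_of_runs {G : Game M} {H : Game N} (Q : Runs G.tree → ℕ → N)
    (hQ : ∀ R, Q R ∈ Runs H.tree)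
    (hcoh : ∀ R R' : Runs G.tree, ∀ d, runPrefix R.1 d = runPrefix R'.1 d →
      runPrefix (Q R) d = runPrefix (Q R') d)
    (hpay : ∀ R : Runs G.tree, (R : ℕ → M) ∈ G.payoff → Q R ∈ H.payoff) :
    ∃ g, IsAMorphism G H g ∧ ∀ (R : Runs G.tree) d, g (runPrefix R.1 d) = runPrefix (Q R) d := by
  classical
  choose ρ hρ hρt using fun t (ht : t ∈ G.tree) => exists_mem_runs_runPrefix_eq G.isGameTree ht
  let g t := if ht : t ∈ G.tree then runPrefix (Q ⟨ρ t ht, hρ t ht⟩) t.length else []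
  have hg (R : Runs G.tree) (d : ℕ) : g (runPrefix R.1 d) = runPrefix (Q R) d := by
    have hρR := hρt _ (R.2 d)
    rw [runPrefix_length] at hρR
    simp only [g, dif_pos (R.2 d), runPrefix_length]
    exact hcoh _ _ _ hρR
  have hcover (t : List M) (ht : t ∈ G.tree) : ∃ R : Runs G.tree, runPrefix R.1 t.length = t :=
    ⟨⟨ρ t ht, hρ t ht⟩, hρt t ht⟩
  refine ⟨g, ⟨⟨fun t ht => ?_, fun t ht => ?_, fun t ht k => ?_⟩, ?_⟩, hg⟩
  · obtain ⟨R, hR⟩ := hcover t ht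
    rw [← hR, hg]
    exact hQ R _
  · obtain ⟨R, hR⟩ := hcover t ht
    rw [← hR, hg, runPrefix_length, runPrefix_length]
  · obtain ⟨R, hR⟩ := hcover t ht
    rw [← hR, runPrefix_take, hg, hg, runPrefix_take]
  · intro R hR S hS
    have hS' : S = Q ⟨R, G.payoff_subset hR⟩ :=
      runPrefix_injective (funext fun d => (hS d).trans (hg ⟨R, _⟩ d))
    exact hS' ▸ hpay _ hR

end Morphisms

section Unions

variable {M : Type u} {N : Type u}

lemma isGamesACoconeColimit_of_iUnion {S : ℕ → Game M} {L : Game M}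
    (hmono : ∀ n, (S n).tree ⊆ (S (n + 1)).tree) (htree : L.tree ⊆ ⋃ n, (S n).tree)
    (hpay : L.payoff ⊆ ⋃ n, (S n).payoff) :
    IsGamesACoconeColimit.{u, u, w} S (fun _ => id) L (fun _ => id) := by
  classical
  intro P H h hh hcoc
  have hagree {n m : ℕ} (hnm : n ≤ m) : ∀ t ∈ (S n).tree, h m t = h n t := by
    induction m, hnm using Nat.le_induction with
    | base => exact fun _ _ => rfl
    | succ m hnm ih =>
      exact fun t ht => (hcoc m t (monotone_nat_of_le_succ hmono hnm ht)).trans (ih t ht)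
  let k v := if hv : ∃ n, v ∈ (S n).tree then h (Nat.find hv) v else []
  have hk (n : ℕ) (t : List M) (ht : t ∈ (S n).tree) : k t = h n t := by
    have hv : ∃ n, t ∈ (S n).tree := ⟨n, ht⟩
    exact (dif_pos hv).trans (hagree (Nat.find_min' hv ht) t (Nat.find_spec hv)).symm
  have hcov (t : List M) (ht : t ∈ L.tree) : ∃ n, t ∈ (S n).tree := Set.mem_iUnion.1 (htree ht)
  refine ⟨k, ⟨⟨fun t ht => ?_, fun t ht => ?_, fun t ht j => ?_⟩, fun R hR X hX => ?_⟩, hk, ?_⟩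
  · obtain ⟨n, hn⟩ := hcov t ht
    exact hk n t hn ▸ (hh n).1.1 t hn
  · obtain ⟨n, hn⟩ := hcov t ht
    exact hk n t hn ▸ (hh n).1.2.1 t hn
  · obtain ⟨n, hn⟩ := hcov t ht
    rw [hk n t hn, hk n _ ((S n).isGameTree.1 t hn j)]
    exact (hh n).1.2.2 t hn j
  · obtain ⟨n, hn⟩ := Set.mem_iUnion.1 (hpay hR)
    exact (hh n).2 R hn X fun m => (hX m).trans (hk n _ ((S n).payoff_subset hn m))
  · intro k' _ hk' t ht
    obtain ⟨n, hn⟩ := hcov t ht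
    exact (hk' n t hn).trans (hk n t hn).symm

lemma WeaklyFinSmallGamesA.exists_factor_of_iUnion {G : Game M} (hG : WeaklyFinSmallGamesA G)
    {S : ℕ → Game N} {L : Game N} (htree : ∀ n, (S n).tree ⊆ (S (n + 1)).tree)
    (hpay : ∀ n, (S n).payoff ⊆ (S (n + 1)).payoff) (hLtree : L.tree = ⋃ n, (S n).tree)
    (hLpay : L.payoff = ⋃ n, (S n).payoff) {f : List M → List N} (hf : IsAMorphism G L f) :
    ∃ n g, IsAMorphism G (S n) g ∧ ∀ t ∈ G.tree, g t = f t :=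
  hG (fun _ => N) S (fun _ => id) (fun n => isAMorphism_id (htree n) (hpay n)) N L (fun _ => id)
    (fun n => isAMorphism_id ((Set.subset_iUnion (fun i => (S i).tree) n).trans hLtree.ge)
      ((Set.subset_iUnion (fun i => (S i).payoff) n).trans hLpay.ge))
    (fun _ _ _ => rfl) (isGamesACoconeColimit_of_iUnion htree hLtree.subset hLpay.subset) f hf

/-- Enumerate winning runs `a 0, a 1, …`; stage `n` gives up `a m` for `m > n`, so `G` maps
into the union but not into any stage. -/
lemma not_weaklyFinSmall_of_payoff_infinite {G : Game M} (hinf : G.payoff.Infinite) :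
    ¬ WeaklyFinSmallGamesA G := by
  intro hG
  let a : ℕ ↪ G.payoff := hinf.natEmbedding
  let S (n : ℕ) : Game M :=
    { tree := G.tree, isGameTree := G.isGameTree
      payoff := Runs G.tree \ (fun m => (a m : ℕ → M)) '' Set.Ioi n
      payoff_subset := Set.sdiff_subset }
  let L : Game M :=
    { tree := G.tree, isGameTree := G.isGameTree, payoff := Runs G.tree
      payoff_subset := subset_rfl }
  have hpay (n : ℕ) : (S n).payoff ⊆ (S (n + 1)).payoff :=
    Set.sdiff_subset_sdiff_right (Set.image_mono (Set.Ioi_subset_Ioi n.le_succ))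
  have hLpay : L.payoff = ⋃ n, (S n).payoff := by
    refine subset_antisymm (fun R hR => ?_) (Set.iUnion_subset fun n => Set.sdiff_subset)
    by_cases ha : ∃ m, (a m : ℕ → M) = R
    · obtain ⟨m, rfl⟩ := ha
      refine Set.mem_iUnion.2 ⟨m, hR, ?_⟩
      rintro ⟨m', hm', hm'm⟩
      exact (Set.mem_Ioi.1 hm').ne' (a.injective (Subtype.ext hm'm))
    · exact Set.mem_iUnion.2 ⟨0, hR, fun ⟨m, _, hm⟩ => ha ⟨m, hm⟩⟩
  obtain ⟨n, g, hg, hgid⟩ := hG.exists_factor_of_iUnion (S := S) (L := L) (fun _ => subset_rfl) hpay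
    (Set.iUnion_const _).symm hLpay (isAMorphism_id subset_rfl G.payoff_subset)
  have ha := (a (n + 1)).2
  have hbar : BarMapsTo g (a (n + 1)) (a (n + 1)) :=
    fun d => (hgid _ (G.payoff_subset ha d)).symm
  exact (hg.2 _ ha _ hbar).2 ⟨n + 1, n.lt_succ_self, rfl⟩

end Unions

section PrefixTree

variable {M : Type u}

def prefixTree (F : Set (ℕ → M)) : Set (List M) :=
  {t | ∃ R ∈ F, runPrefix R t.length = t}

lemma prefixTree_mono : Monotone (prefixTree (M := M)) :=
  fun _ _ hFF' _ ⟨R, hR, hRt⟩ => ⟨R, hFF' hR, hRt⟩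

lemma isGameTree_prefixTree (F : Set (ℕ → M)) : IsGameTree (prefixTree F) := by
  refine ⟨fun t ⟨R, hR, hRt⟩ k => ⟨R, hR, ?_⟩, fun t ⟨R, hR, hRt⟩ => ⟨R t.length, R, hR, ?_⟩⟩
  · rw [List.length_take, ← runPrefix_take, hRt]
  · rw [List.length_append, List.length_singleton, runPrefix_succ, hRt]

lemma subset_runs_prefixTree (F : Set (ℕ → M)) : F ⊆ Runs (prefixTree F) :=
  fun R hR n => ⟨R, hR, by rw [runPrefix_length]⟩

lemma isAMorphism_map {N : Type v} {G : Game M} {H : Game N} (μ : M → N)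
    (htree : prefixTree ((μ ∘ ·) '' Runs G.tree) ⊆ H.tree)
    (hpay : (μ ∘ ·) '' G.payoff ⊆ H.payoff) : IsAMorphism G H (List.map μ) := by
  refine ⟨⟨fun t ht => htree ?_, fun t _ => List.length_map _, fun t _ k => List.map_take⟩,
    fun R hR X hX => hpay ⟨R, hR, runPrefix_injective ?_⟩⟩
  · obtain ⟨R, hR, hRt⟩ := exists_mem_runs_runPrefix_eq G.isGameTree ht
    exact ⟨μ ∘ R, ⟨R, hR, rfl⟩, by rw [List.length_map, runPrefix_map, hRt]⟩
  · exact funext fun d => (runPrefix_map μ R d).trans (hX d).symm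

end PrefixTree

/-- Tag moves with a `Bool`. Stage `n` is spanned by the runs of `G` (tagged `false`) that leave
`R₀` by time `n` and by the detours `D j`, `j ≤ n`, which follow `R₀` but switch the tag at time
`j`. The detours put every prefix of `R₀` into the union of the stages, yet no stage contains
`R₀↾(n+1)`; since `R₀` is not winning, every winning run lies in some stage. -/
lemma not_weaklyFinSmall_of_mem_runs_of_not_mem_payoff {M : Type u} {G : Game M} {R₀ : ℕ → M}
    (hR₀ : R₀ ∈ Runs G.tree) (hR₀A : R₀ ∉ G.payoff) : ¬ WeaklyFinSmallGamesA G := by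
  intro hG
  let μ : M → M × Bool := fun x => (x, false)
  let D (j : ℕ) : ℕ → M × Bool := fun i => (R₀ i, decide (j ≤ i))
  let F : Set (ℕ → M × Bool) := (μ ∘ ·) '' Runs G.tree ∪ Set.range D
  let Fn (n : ℕ) : Set (ℕ → M × Bool) :=
    {X ∈ F | runPrefix X (n + 1) ≠ runPrefix (μ ∘ R₀) (n + 1)}
  let A : Set (ℕ → M × Bool) := (μ ∘ ·) '' G.payoff
  have hA : A ⊆ F := Set.image_mono G.payoff_subset |>.trans Set.subset_union_left
  let S (n : ℕ) : Game (M × Bool) :=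
    { tree := prefixTree (Fn n), isGameTree := isGameTree_prefixTree _
      payoff := A ∩ Runs (prefixTree (Fn n)), payoff_subset := Set.inter_subset_right }
  let L : Game (M × Bool) :=
    { tree := prefixTree F, isGameTree := isGameTree_prefixTree _
      payoff := A, payoff_subset := hA.trans (subset_runs_prefixTree F) }
  have htree (n : ℕ) : (S n).tree ⊆ (S (n + 1)).tree :=
    prefixTree_mono fun X ⟨hX, hne⟩ => ⟨hX, fun h => hne (runPrefix_eq_of_le (n + 1).le_succ h)⟩
  have hpay (n : ℕ) : (S n).payoff ⊆ (S (n + 1)).payoff :=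
    Set.inter_subset_inter_right _ fun X hX m => htree n (hX m)
  have hLtree : L.tree = ⋃ n, (S n).tree := by
    refine subset_antisymm (fun t ⟨X, hX, hXt⟩ => Set.mem_iUnion.2 ⟨t.length, ?_⟩)
      (Set.iUnion_subset fun n => prefixTree_mono fun _ h => h.1)
    by_cases hXR₀ : runPrefix X (t.length + 1) = runPrefix (μ ∘ R₀) (t.length + 1)
    · refine ⟨D t.length, ⟨Or.inr ⟨_, rfl⟩, fun h => ?_⟩, ?_⟩
      · simpa [D, μ] using runPrefix_eq_iff.1 h t.length t.length.lt_succ_self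
      · refine .trans ?_ ((runPrefix_eq_of_le t.length.le_succ hXR₀).symm.trans hXt)
        exact runPrefix_eq_iff.2 fun i hi => by simp [D, μ, Nat.not_le.2 hi]
    · exact ⟨X, ⟨hX, hXR₀⟩, hXt⟩
  have hLpay : L.payoff = ⋃ n, (S n).payoff := by
    refine subset_antisymm ?_ (Set.iUnion_subset fun n => Set.inter_subset_left)
    rintro _ ⟨R, hR, rfl⟩
    obtain ⟨i, hi⟩ := Function.ne_iff.1 (ne_of_mem_of_not_mem hR hR₀A)
    refine Set.mem_iUnion.2 ⟨i, ⟨R, hR, rfl⟩, subset_runs_prefixTree _ ⟨hA ⟨R, hR, rfl⟩, ?_⟩⟩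
    exact fun h => hi (congrArg Prod.fst (runPrefix_eq_iff.1 h i i.lt_succ_self))
  have hf : IsAMorphism G L (List.map μ) :=
    isAMorphism_map μ (prefixTree_mono Set.subset_union_left) subset_rfl
  obtain ⟨n, g, hg, hgf⟩ := hG.exists_factor_of_iUnion htree hpay hLtree hLpay hf
  obtain ⟨X, ⟨-, hX⟩, hXt⟩ := hgf _ (hR₀ (n + 1)) ▸ hg.1.1 _ (hR₀ (n + 1))
  rw [List.length_map, runPrefix_length, ← runPrefix_map] at hXt
  exact hX hXt

lemma exists_iterate_eq_of_eqvGen {α : Type w} {f : α → α} {a b : α}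
    (h : Relation.EqvGen (fun x y => y = f x) a b) : ∃ i j, f^[i] a = f^[j] b := by
  induction h with
  | rel x y hxy => exact ⟨1, 0, hxy.symm⟩
  | refl x => exact ⟨0, 0, rfl⟩
  | symm x y _ ih =>
    obtain ⟨i, j, h⟩ := ih
    exact ⟨j, i, h.symm⟩
  | trans x y z _ _ ih₁ ih₂ =>
    obtain ⟨i, j, h₁⟩ := ih₁
    obtain ⟨i', j', h₂⟩ := ih₂
    refine ⟨i' + i, j + j', ?_⟩
    rw [Function.iterate_add_apply, h₁, ← Function.iterate_add_apply, add_comm,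
      Function.iterate_add_apply, h₂, ← Function.iterate_add_apply]

def prefixPath {α : Type u} {β : Type v} (c : List α → β) (t : List α) : List β :=
  runPrefix (fun j => c (t.take (j + 1))) t.length

lemma chronological_prefixPath {α : Type u} {β : Type v} (c : List α → β) (T : Set (List α)) :
    Chronological T Set.univ (prefixPath c) := by
  refine ⟨fun _ _ => trivial, fun t _ => runPrefix_length _ _, fun t _ k => ?_⟩
  rw [prefixPath, prefixPath, runPrefix_take, List.length_take]
  exact runPrefix_eq_iff.2 fun i hi => by rw [List.take_take, min_eq_left (by omega)]

lemma apply_eq_of_prefixPath_eq {α : Type u} {β : Type v} {c : List α → β} {x y : List α}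
    (h : prefixPath c x = prefixPath c y) (hx : x ≠ []) : c x = c y := by
  have hlen : x.length = y.length := by simpa [prefixPath] using congrArg List.length h
  have hpos : 0 < x.length := List.length_pos_iff.2 hx
  rw [prefixPath, prefixPath, ← hlen] at h
  have := runPrefix_eq_iff.1 h (x.length - 1) (by omega)
  rwa [Nat.sub_add_cancel hpos, List.take_length, hlen, List.take_length] at this

section Colimits

variable {MS : ℕ → Type u} {S : ∀ n, Game (MS n)} {s : ∀ n, List (MS n) → List (MS (n + 1))}
  {N : Type v} {L : Game N} {q : ∀ n, List (MS n) → List N}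

def coconeImage {P : Type w} (S : ∀ n, Game (MS n)) (h : ∀ n, List (MS n) → List P)
    (hh : ∀ n, Chronological (S n).tree Set.univ (h n)) : Game P where
  tree := ⋃ n, h n '' (S n).tree
  isGameTree := by
    refine ⟨fun v hv k => ?_, fun v hv => ?_⟩ <;> obtain ⟨n, t, ht, rfl⟩ := Set.mem_iUnion.1 hv
    · exact Set.mem_iUnion.2 ⟨n, t.take k, (S n).isGameTree.1 t ht k, (hh n).2.2 t ht k⟩
    · obtain ⟨x, hx⟩ := (S n).isGameTree.2 t ht
      obtain ⟨y, hy⟩ := (hh n).exists_append_singleton hx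
      exact ⟨y, Set.mem_iUnion.2 ⟨n, t ++ [x], hx, hy⟩⟩
  payoff := {X | ∃ n, ∃ R ∈ (S n).payoff, BarMapsTo (h n) R X}
  payoff_subset := fun _ ⟨n, _, hR, hX⟩ m =>
    Set.mem_iUnion.2 ⟨n, _, (S n).payoff_subset hR m, (hX m).symm⟩

lemma isAMorphism_coconeImage {P : Type w} (h : ∀ n, List (MS n) → List P)
    (hh : ∀ n, Chronological (S n).tree Set.univ (h n)) (n : ℕ) :
    IsAMorphism (S n) (coconeImage S h hh) (h n) :=
  ⟨⟨fun t ht => Set.mem_iUnion.2 ⟨n, t, ht, rfl⟩, (hh n).2.1, (hh n).2.2⟩,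
    fun R hR _ hX => ⟨n, R, hR, hX⟩⟩

lemma IsGamesACoconeColimit.hom_ext {P : Type w} (hL : IsGamesACoconeColimit.{u, v, w} S s L q)
    (hq : ∀ n, IsAMorphism (S n) L (q n)) (hqs : ∀ n, ∀ t ∈ (S n).tree, q (n + 1) (s n t) = q n t)
    {H : Game P} {k k' : List N → List P} (hk : IsAMorphism L H k) (hk' : IsAMorphism L H k')
    (hkk' : ∀ n, ∀ t ∈ (S n).tree, k (q n t) = k' (q n t)) : ∀ t ∈ L.tree, k t = k' t := by
  obtain ⟨k₀, -, -, huniq⟩ := hL P H (fun n => k ∘ q n) (fun n => hk.comp (hq n))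
    (fun n t ht => congrArg k (hqs n t ht))
  exact fun t ht => (huniq k hk (fun _ _ _ => rfl) t ht).trans
    (huniq k' hk' (fun n t ht => (hkk' n t ht).symm) t ht).symm

/-- By uniqueness, the mediating map from `L` to the image of the cocone is the identity, so `L`
has no winning runs beyond those coming from the stages. -/
lemma IsGamesACoconeColimit.exists_of_mem_payoff (hL : IsGamesACoconeColimit.{u, v, v} S s L q)
    (hq : ∀ n, IsAMorphism (S n) L (q n)) (hqs : ∀ n, ∀ t ∈ (S n).tree, q (n + 1) (s n t) = q n t)
    {X : ℕ → N} (hX : X ∈ L.payoff) : ∃ n, ∃ R ∈ (S n).payoff, BarMapsTo (q n) R X := by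
  let H := coconeImage S q fun n => ⟨fun _ _ => trivial, (hq n).1.2⟩
  have hHL : IsAMorphism H L id :=
    isAMorphism_id (Set.iUnion_subset fun n => Set.image_subset_iff.2 (hq n).1.1)
      fun Y ⟨n, R, hR, hY⟩ => (hq n).2 R hR Y hY
  obtain ⟨k, hk, hkq, -⟩ := hL N H q (isAMorphism_coconeImage _ _) hqs
  have hkid : ∀ t ∈ L.tree, k t = t :=
    hL.hom_ext hq hqs (hHL.comp hk) (isAMorphism_id subset_rfl subset_rfl) hkq
  exact hk.2 X hX X fun d => (hkid _ (L.payoff_subset hX d)).symm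

lemma IsGamesACoconeColimit.eventually_exists_of_mem_payoff
    (hL : IsGamesACoconeColimit.{u, v, v} S s L q) (hs : ∀ n, IsAMorphism (S n) (S (n + 1)) (s n))
    (hq : ∀ n, IsAMorphism (S n) L (q n)) (hqs : ∀ n, ∀ t ∈ (S n).tree, q (n + 1) (s n t) = q n t)
    {X : ℕ → N} (hX : X ∈ L.payoff) :
    ∀ᶠ n in Filter.atTop, ∃ R ∈ (S n).payoff, BarMapsTo (q n) R X := by
  obtain ⟨n, hn⟩ := hL.exists_of_mem_payoff hq hqs hX
  refine Filter.eventually_atTop.2 ⟨n, fun m hnm => ?_⟩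
  induction m, hnm using Nat.le_induction with
  | base => exact hn
  | succ m _ ih =>
    obtain ⟨R, hR, hRX⟩ := ih
    obtain ⟨R', hR'⟩ := (hs m).1.exists_barMapsTo ((S m).payoff_subset hR)
    refine ⟨R', (hs m).2 R hR R' hR', fun d => (hRX d).trans ?_⟩
    rw [hR' d, hqs m _ ((S m).payoff_subset hR d)]

def transition (s : ∀ n, List (MS n) → List (MS (n + 1))) (n : ℕ) :
    ∀ k, List (MS n) → List (MS (n + k))
  | 0 => id
  | k + 1 => s (n + k) ∘ transition s n k

lemma transition_eq_of_le {n k j : ℕ} (hkj : k ≤ j) {x y : List (MS n)}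
    (h : transition s n k x = transition s n k y) : transition s n j x = transition s n j y := by
  induction j, hkj using Nat.le_induction with
  | base => exact h
  | succ j _ ih => exact congrArg (s (n + j)) ih

lemma isAMorphism_transition (hs : ∀ n, IsAMorphism (S n) (S (n + 1)) (s n)) (n k : ℕ) :
    IsAMorphism (S n) (S (n + k)) (transition s n k) := by
  induction k with
  | zero => exact isAMorphism_id subset_rfl subset_rfl
  | succ k ih => exact (hs (n + k)).comp ih

lemma cocone_apply_transition (hs : ∀ n, IsAMorphism (S n) (S (n + 1)) (s n))
    (hqs : ∀ n, ∀ t ∈ (S n).tree, q (n + 1) (s n t) = q n t) (n k : ℕ) :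
    ∀ t ∈ (S n).tree, q (n + k) (transition s n k t) = q n t := by
  induction k with
  | zero => exact fun _ _ => rfl
  | succ k ih =>
    exact fun t ht => (hqs (n + k) _ ((isAMorphism_transition hs n k).1.1 t ht)).trans (ih t ht)

def sigmaStep (s : ∀ n, List (MS n) → List (MS (n + 1))) :
    (Σ n, List (MS n)) → Σ n, List (MS n) :=
  fun a => ⟨a.1 + 1, s a.1 a.2⟩

lemma sigmaStep_iterate (n k : ℕ) (t : List (MS n)) :
    (sigmaStep s)^[k] ⟨n, t⟩ = ⟨n + k, transition s n k t⟩ := by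
  induction k with
  | zero => rfl
  | succ k ih => rw [Function.iterate_succ_apply', ih]; rfl

/-- Test the colimit against the colimit of the stages' trees in `Type`, whose moves are the
moments of all stages modulo the connecting maps. -/
lemma IsGamesACoconeColimit.eventually_transition_eq
    (hL : IsGamesACoconeColimit.{u, v, u} S s L q) (hs : ∀ n, IsAMorphism (S n) (S (n + 1)) (s n))
    {n : ℕ} {x y : List (MS n)} (hx : x ∈ (S n).tree) (hy : y ∈ (S n).tree)
    (hxy : q n x = q n y) : ∀ᶠ k in Filter.atTop, transition s n k x = transition s n k y := by
  let r (a b : Σ n, List (MS n)) : Prop := b = sigmaStep s a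
  let h (n : ℕ) : List (MS n) → List (Quot r) := prefixPath fun t => Quot.mk r ⟨n, t⟩
  have hcoc (n : ℕ) (t : List (MS n)) (ht : t ∈ (S n).tree) : h (n + 1) (s n t) = h n t := by
    simp only [h, prefixPath]
    rw [(hs n).1.2.1 t ht]
    refine runPrefix_eq_iff.2 fun i _ => ?_
    rw [← (hs n).1.2.2 t ht]
    exact (Quot.sound (r := r) (a := ⟨n, t.take (i + 1)⟩) rfl).symm
  obtain ⟨k, -, hk, -⟩ := hL _ (coconeImage S h fun n => chronological_prefixPath _ _) h
    (isAMorphism_coconeImage _ _) hcoc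
  have hh : h n x = h n y := by rw [← hk n x hx, ← hk n y hy, hxy]
  suffices ∃ i, transition s n i x = transition s n i y by
    obtain ⟨i, hi⟩ := this
    exact Filter.eventually_atTop.2 ⟨i, fun j hij => transition_eq_of_le hij hi⟩
  by_cases hx0 : x = []
  · have hy0 : y = [] := by
      simpa [hx0, h, prefixPath, eq_comm] using congrArg List.length hh
    exact ⟨0, hx0.trans hy0.symm⟩
  obtain ⟨i, j, hij⟩ := exists_iterate_eq_of_eqvGen
    (Quot.eqvGen_exact (apply_eq_of_prefixPath_eq (c := fun t => Quot.mk r ⟨n, t⟩) hh hx0))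
  rw [sigmaStep_iterate, sigmaStep_iterate] at hij
  obtain ⟨hij', hxy'⟩ := Sigma.mk.inj_iff.1 hij
  obtain rfl : i = j := by omega
  exact ⟨i, eq_of_heq hxy'⟩

/-- The lifts of two distinct runs need only agree up to the moment the runs branch, which is a
single pair of moments. -/
lemma IsGamesACoconeColimit.eventually_transition_coherent {M : Type w} {F : Set (ℕ → M)}
    [Finite F] (hL : IsGamesACoconeColimit.{u, v, u} S s L q)
    (hs : ∀ n, IsAMorphism (S n) (S (n + 1)) (s n)) {m : ℕ} (Q : F → ℕ → MS m)
    (hQ : ∀ R, Q R ∈ Runs (S m).tree)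
    (hQF : ∀ R R' : F, ∀ d, runPrefix R.1 d = runPrefix R'.1 d →
      q m (runPrefix (Q R) d) = q m (runPrefix (Q R') d)) :
    ∀ᶠ k in Filter.atTop, ∀ R R' : F, ∀ d, runPrefix R.1 d = runPrefix R'.1 d →
      transition s m k (runPrefix (Q R) d) = transition s m k (runPrefix (Q R') d) := by
  refine Filter.eventually_all.2 fun R => Filter.eventually_all.2 fun R' => ?_
  rcases eq_or_ne R R' with rfl | hne
  · exact Filter.Eventually.of_forall fun _ _ _ => rfl
  obtain ⟨d₀, hd₀, hmax⟩ := exists_forall_runPrefix_eq_le (Subtype.coe_injective.ne hne)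
  filter_upwards [hL.eventually_transition_eq hs (hQ R d₀) (hQ R' d₀) (hQF R R' d₀ hd₀)]
    with k hk d hd
  have htake := (isAMorphism_transition hs m k).1.2.2
  rw [← runPrefix_take_of_le _ (hmax d hd), htake _ (hQ R d₀), hk, ← htake _ (hQ R' d₀),
    runPrefix_take_of_le _ (hmax d hd)]

end Colimits

lemma weaklyFinSmall_of_isFin_of_payoff_eq {M : Type u} {G : Game M} (hfin : G.IsFin)
    (htriv : G.payoff = Runs G.tree) : WeaklyFinSmallGamesA G := by
  intro MS S s hs N L q hq hqs hL f hf
  have : Finite (Runs G.tree) := hfin.to_subtype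
  have hX (R : Runs G.tree) : ∃ X ∈ L.payoff, BarMapsTo f R X := by
    obtain ⟨X, hX⟩ := hf.1.exists_barMapsTo R.2
    exact ⟨X, hf.2 R (htriv.ge R.2) X hX, hX⟩
  choose X hXpay hX using hX
  obtain ⟨m, hm⟩ := (Filter.eventually_all.2 fun R =>
    hL.eventually_exists_of_mem_payoff hs hq hqs (hXpay R)).exists
  choose Q hQpay hQX using hm
  have hQ (R : Runs G.tree) : Q R ∈ Runs (S m).tree := (S m).payoff_subset (hQpay R)
  have hQf (R : Runs G.tree) (d : ℕ) : q m (runPrefix (Q R) d) = f (runPrefix R.1 d) :=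
    (hQX R d).symm.trans (hX R d)
  obtain ⟨k, hk⟩ := (hL.eventually_transition_coherent hs Q hQ
    fun R R' d hd => by rw [hQf, hQf, hd]).exists
  have htr := isAMorphism_transition hs m k
  choose Y hY using fun R => htr.1.exists_barMapsTo (hQ R)
  obtain ⟨g, hg, hgY⟩ := exists_isAMorphism_of_runs (H := S (m + k)) Y
    (fun R => htr.1.mem_runs (hQ R) (hY R)) (fun R R' d hd => by rw [hY, hY, hk R R' d hd])
    (fun R _ => htr.2 _ (hQpay R) _ (hY R))
  refine ⟨m + k, g, hg, fun t ht => ?_⟩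
  obtain ⟨R, hR, hRt⟩ := exists_mem_runs_runPrefix_eq G.isGameTree ht
  rw [← hRt, hgY ⟨R, hR⟩, hY, cocone_apply_transition hs hqs _ _ _ (hQ _ _), hQf]

/-- a game is weakly finitely small in `Games_A` iff it is a finite game
that is trivial for Ali. -/
theorem weaklyFinSmall_gamesA_iff {M : Type u} (G : Game M) :
    WeaklyFinSmallGamesA G ↔ G.IsFin ∧ G.payoff = Runs G.tree := by
  refine ⟨fun hG => ?_, fun ⟨hfin, htriv⟩ => weaklyFinSmall_of_isFin_of_payoff_eq hfin htriv⟩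
  have htriv : G.payoff = Runs G.tree := G.payoff_subset.antisymm fun R hR =>
    by_contra fun hRA => not_weaklyFinSmall_of_mem_runs_of_not_mem_payoff hR hRA hG
  refine ⟨Set.not_infinite.1 fun hinf => ?_, htriv⟩
  exact not_weaklyFinSmall_of_payoff_infinite (htriv ▸ hinf) hG

end FraisseGames
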